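/- arXiv:1508.05546 — 4 statements merged into one kernel-verified Lean document; each statement's English description precedes it below -/
import Mathlib

section
/- Let K be an algebraically closed field of characteristic zero, n ≥ 1, s ≥ 1, and let ℓ_1, …, ℓ_{2s} be linear forms in K[x_0,…,x_n] whose linear span has dimension min(2s, n+1) (the generic situation). Then the subspace Σ_{i=1}^{2s} ℓ_i·R_1 of the space R_2 of quadratic forms has dimension C(n+2,2) − C(n+2−min(2s,n+1), 2); in particular, if 2s ≤ n+1 this dimension equals s(2n+1) − 2s(s−1), and if 2s ≥ n+1 it equals C(n+2,2). -/
/-!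
Write `R₁` for the linear forms and `W` for the span of the `ℓ i`, so that the subspace in
question is `W * R₁`. A linear automorphism of `R₁` is a linear change of coordinates, hence
extends to an algebra automorphism of the polynomial ring; such automorphisms act transitively
on the subspaces of `R₁` of a given dimension `m` and preserve `R₁`. So we may take `W` to be
spanned by `m` of the variables, and then `W * R₁` is spanned by the quadratic monomials
divisible by one of them: all `C(n+2, 2)` quadratic monomials, except the `C(n+2-m, 2)` ones in
the remaining `n+1-m` variables.
-/

open MvPolynomial Module

theorem Submodule.iSup_map_mulLeft_eq_span_range_mul {R A ι : Type*} [CommSemiring R]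
    [Semiring A] [Algebra R A] (f : ι → A) (N : Submodule R A) :
    ⨆ i, N.map (LinearMap.mulLeft R (f i)) = Submodule.span R (Set.range f) * N := by
  simp only [Submodule.span_range_eq_iSup, Submodule.iSup_mul, Submodule.span_singleton_mul]
  rfl

theorem Submodule.exists_linearEquiv_map_eq_of_finrank_eq {K V : Type*} [DivisionRing K]
    [AddCommGroup V] [Module K V] [FiniteDimensional K V] {p q : Submodule K V}
    (h : finrank K p = finrank K q) : ∃ e : V ≃ₗ[K] V, p.map (e : V →ₗ[K] V) = q := by
  obtain ⟨p', hp'⟩ := p.exists_isCompl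
  obtain ⟨q', hq'⟩ := q.exists_isCompl
  have h' : finrank K p' = finrank K q' := by
    have := Submodule.finrank_add_eq_of_isCompl hp'
    have := Submodule.finrank_add_eq_of_isCompl hq'
    omega
  let e := (p.prodEquivOfIsCompl p' hp').symm ≪≫ₗ
    ((LinearEquiv.ofFinrankEq p q h).prodCongr (LinearEquiv.ofFinrankEq p' q' h')) ≪≫ₗ
    q.prodEquivOfIsCompl q' hq'
  refine ⟨e, Submodule.eq_of_le_of_finrank_eq ?_ (by rw [LinearEquiv.finrank_map_eq, h])⟩
  rintro _ ⟨x, hx, rfl⟩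
  simp [e, Submodule.prodEquivOfIsCompl_symm_apply_left p p' hp' ⟨x, hx⟩]

namespace MvPolynomial

variable {σ R : Type*}

theorem aeval_eq_of_mem_homogeneousSubmodule_one [CommSemiring R]
    (f : homogeneousSubmodule σ R 1 →ₗ[R] homogeneousSubmodule σ R 1)
    {p : MvPolynomial σ R} (hp : p ∈ homogeneousSubmodule σ R 1) :
    aeval (fun i ↦ (f ⟨X i, isHomogeneous_X R i⟩ : MvPolynomial σ R)) p = f ⟨p, hp⟩ := by
  have hp' : p ∈ Submodule.span R (Set.range X) := homogeneousSubmodule_one_eq_span_X.le hp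
  induction hp' using Submodule.span_induction with
  | mem _ h => obtain ⟨i, rfl⟩ := h; simp
  | zero => simp [show (⟨0, hp⟩ : homogeneousSubmodule σ R 1) = 0 from rfl]
  | add x y hx hy ihx ihy =>
    rw [map_add, ihx (homogeneousSubmodule_one_eq_span_X.ge hx),
      ihy (homogeneousSubmodule_one_eq_span_X.ge hy), ← Submodule.coe_add, ← map_add]
    rfl
  | smul c x hx ihx =>
    rw [map_smul, ihx (homogeneousSubmodule_one_eq_span_X.ge hx), ← Submodule.coe_smul,
      ← map_smul]
    rfl

theorem exists_algEquiv_comp_subtype_eq [CommSemiring R]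
    (e : homogeneousSubmodule σ R 1 ≃ₗ[R] homogeneousSubmodule σ R 1) :
    ∃ φ : MvPolynomial σ R ≃ₐ[R] MvPolynomial σ R,
      φ.toLinearMap ∘ₗ (homogeneousSubmodule σ R 1).subtype =
        (homogeneousSubmodule σ R 1).subtype ∘ₗ e.toLinearMap := by
  let X' (i : σ) : homogeneousSubmodule σ R 1 := ⟨X i, isHomogeneous_X R i⟩
  have aeval_eq (f : homogeneousSubmodule σ R 1 ≃ₗ[R] homogeneousSubmodule σ R 1)
      (p : homogeneousSubmodule σ R 1) :
      aeval (fun i ↦ (f (X' i) : MvPolynomial σ R)) (p : MvPolynomial σ R) = f p :=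
    aeval_eq_of_mem_homogeneousSubmodule_one f.toLinearMap p.2
  refine ⟨AlgEquiv.ofAlgHom (aeval fun i ↦ (e (X' i) : MvPolynomial σ R))
    (aeval fun i ↦ (e.symm (X' i) : MvPolynomial σ R)) ?_ ?_, ?_⟩
  · refine algHom_ext fun i ↦ ?_
    rw [AlgHom.comp_apply, aeval_X, aeval_eq e]
    simp [X']
  · refine algHom_ext fun i ↦ ?_
    rw [AlgHom.comp_apply, aeval_X, aeval_eq e.symm]
    simp [X']
  · exact LinearMap.ext (aeval_eq e)

theorem span_X_image_eq_restrictSupport [CommSemiring R] (t : Set σ) :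
    Submodule.span R (X '' t) = restrictSupport R ((Finsupp.single · 1) '' t) := by
  rw [restrictSupport_eq_span, Set.image_image]
  rfl

theorem finrank_restrictSupport [CommRing R] [Nontrivial R] (s : Set (σ →₀ ℕ)) :
    finrank R (restrictSupport R s) = Nat.card s :=
  finrank_eq_nat_card_basis (basisRestrictSupport R s)

open Finset Pointwise in
theorem finrank_span_X_image_mul_homogeneousSubmodule_one [CommRing R] [Nontrivial R]
    [Fintype σ] [DecidableEq σ] (t : Finset σ) :
    finrank R (Submodule.span R (X (R := R) '' (t : Set σ)) * homogeneousSubmodule σ R 1) =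
      (Fintype.card σ + 1).choose 2 - (Fintype.card σ - #t + 1).choose 2 := by
  -- `f s(i, j)` is the exponent of the monomial `X i * X j`
  let f : Sym2 σ → σ →₀ ℕ :=
    Sym2.lift ⟨fun i j ↦ Finsupp.single i 1 + Finsupp.single j 1, fun _ _ ↦ add_comm _ _⟩
  have hf : Function.Injective f := by
    rintro ⟨i, j⟩ ⟨k, l⟩ h
    simpa [f, Finsupp.single_add_single_eq_single_add_single] using h
  have hset : (Finsupp.single · 1) '' (t : Set σ) +
      Set.range (Finsupp.single · 1 : σ → σ →₀ ℕ) = f '' ↑(univ.sym2 \ tᶜ.sym2) := by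
    ext d
    constructor
    · rintro ⟨_, ⟨i, hi, rfl⟩, _, ⟨j, rfl⟩, rfl⟩
      exact ⟨s(i, j), by simp_all, rfl⟩
    · rintro ⟨⟨i, j⟩, hij, rfl⟩
      simp only [coe_sdiff, Set.mem_sdiff, mem_coe, mem_sym2_iff, mem_univ, implies_true,
        mem_compl, true_and, Sym2.mem_iff, forall_eq_or_imp, forall_eq, not_and_or,
        not_not] at hij
      rcases hij with hi | hj
      · exact ⟨_, ⟨i, hi, rfl⟩, _, ⟨j, rfl⟩, rfl⟩
      · exact ⟨_, ⟨j, hj, rfl⟩, _, ⟨i, rfl⟩, add_comm _ _⟩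
  rw [homogeneousSubmodule_one_eq_span_X, ← Set.image_univ, span_X_image_eq_restrictSupport,
    span_X_image_eq_restrictSupport, ← restrictSupport_add, Set.image_univ, hset,
    finrank_restrictSupport, Nat.card_image_of_injective hf, Nat.card_coe_set_eq,
    Set.ncard_coe_finset, card_sdiff_of_subset (sym2_mono (subset_univ _)), card_sym2, card_sym2,
    card_univ, card_compl]

theorem finrank_mul_homogeneousSubmodule_one_eq_of_finrank_eq {K : Type*} [Field K] [Finite σ]
    {W W' : Submodule K (MvPolynomial σ K)} (hW : W ≤ homogeneousSubmodule σ K 1)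
    (hW' : W' ≤ homogeneousSubmodule σ K 1) (h : finrank K W = finrank K W') :
    finrank K (W * homogeneousSubmodule σ K 1) = finrank K (W' * homogeneousSubmodule σ K 1) := by
  set L := homogeneousSubmodule σ K 1
  have : FiniteDimensional K L := Module.Finite.iff_fg.mpr (homogeneousSubmodule_fg σ K 1)
  obtain ⟨e, he⟩ := Submodule.exists_linearEquiv_map_eq_of_finrank_eq
    (p := W.comap L.subtype) (q := W'.comap L.subtype) <| by
      rwa [(Submodule.comapSubtypeEquivOfLe hW).finrank_eq,
        (Submodule.comapSubtypeEquivOfLe hW').finrank_eq]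
  obtain ⟨φ, hφ⟩ := exists_algEquiv_comp_subtype_eq e
  have hmap (p : Submodule K L) :
      (p.map L.subtype).map φ.toAlgHom.toLinearMap = (p.map e.toLinearMap).map L.subtype := by
    rw [← Submodule.map_comp, ← Submodule.map_comp, AlgEquiv.toAlgHom_toLinearMap, hφ]
  have hWmap : W.map φ.toAlgHom.toLinearMap = W' := by
    rw [← inf_eq_right.mpr hW, ← Submodule.map_comap_subtype, hmap, he,
      Submodule.map_comap_subtype, inf_eq_right.mpr hW']
  have hLmap : L.map φ.toAlgHom.toLinearMap = L := by
    rw [← Submodule.map_subtype_top L, hmap, Submodule.map_top, LinearEquiv.range]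
  calc finrank K (W * L) = finrank K ((W * L).map φ.toLinearEquiv.toLinearMap) :=
        (LinearEquiv.finrank_map_eq φ.toLinearEquiv _).symm
    _ = finrank K (W' * L) := by
        rw [← AlgEquiv.toAlgHom_toLinearMap, Submodule.map_mul, hWmap, hLmap]

theorem finrank_mul_homogeneousSubmodule_one {K : Type*} [Field K] [Fintype σ]
    {W : Submodule K (MvPolynomial σ K)} (hW : W ≤ homogeneousSubmodule σ K 1) :
    finrank K (W * homogeneousSubmodule σ K 1) =
      (Fintype.card σ + 1).choose 2 - (Fintype.card σ - finrank K W + 1).choose 2 := by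
  classical
  have : Module.Finite K (homogeneousSubmodule σ K 1) :=
    Module.Finite.iff_fg.mpr (homogeneousSubmodule_fg σ K 1)
  have hle : finrank K W ≤ Fintype.card σ :=
    calc finrank K W ≤ finrank K (homogeneousSubmodule σ K 1) := Submodule.finrank_mono hW
      _ ≤ Fintype.card σ := by
        rw [homogeneousSubmodule_one_eq_span_X]; exact finrank_range_le_card X
  obtain ⟨t, -, ht⟩ := Finset.exists_subset_card_eq (s := Finset.univ) hle
  have hspan_le :
      Submodule.span K (X (R := K) '' (t : Set σ)) ≤ homogeneousSubmodule σ K 1 := by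
    rw [homogeneousSubmodule_one_eq_span_X]
    exact Submodule.span_mono (Set.image_subset_range _ _)
  have hrank : finrank K W = finrank K (Submodule.span K (X (R := K) '' (t : Set σ))) := by
    rw [span_X_image_eq_restrictSupport, finrank_restrictSupport,
      Nat.card_image_of_injective (Finsupp.single_left_injective one_ne_zero),
      Nat.card_coe_set_eq, Set.ncard_coe_finset, ht]
  rw [finrank_mul_homogeneousSubmodule_one_eq_of_finrank_eq hW hspan_le hrank,
    finrank_span_X_image_mul_homogeneousSubmodule_one, ht]

end MvPolynomial

theorem Nat.choose_two_sub_choose_two_sub_two_mul {n s : ℕ} (h : 2 * s ≤ n + 1) :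
    (n + 2).choose 2 - (n + 2 - 2 * s).choose 2 = s * (2 * n + 1) - 2 * s * (s - 1) := by
  rcases Nat.eq_zero_or_pos s with rfl | hs
  · simp
  have h1 : (n + 2 - 2 * s).choose 2 ≤ (n + 2).choose 2 := Nat.choose_le_choose 2 (Nat.sub_le _ _)
  have h2 : 2 * s * (s - 1) ≤ s * (2 * n + 1) := by
    have : 2 * (s - 1) ≤ 2 * n + 1 := by omega
    nlinarith
  have h3 : 2 * s ≤ n + 2 := by omega
  qify [h1, h2]
  rw [Nat.cast_choose_two, Nat.cast_choose_two]
  push_cast [Nat.cast_sub h3, Nat.cast_sub hs]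
  ring

theorem stmt0_general (K : Type*) [Field K]
    (n s : ℕ)
    (ℓ : Fin (2 * s) → MvPolynomial (Fin (n + 1)) K)
    (hhom : ∀ i, (ℓ i).IsHomogeneous 1)
    (hspan : Module.finrank K ↥(Submodule.span K (Set.range ℓ)) = min (2 * s) (n + 1)) :
    Module.finrank K ↥(⨆ i : Fin (2 * s),
        Submodule.map (LinearMap.mulLeft K (ℓ i))
          (homogeneousSubmodule (Fin (n + 1)) K 1))
      = (n + 2).choose 2 - (n + 2 - min (2 * s) (n + 1)).choose 2 ∧
    (2 * s ≤ n + 1 →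
      Module.finrank K ↥(⨆ i : Fin (2 * s),
          Submodule.map (LinearMap.mulLeft K (ℓ i))
            (homogeneousSubmodule (Fin (n + 1)) K 1))
        = s * (2 * n + 1) - 2 * s * (s - 1)) ∧
    (n + 1 ≤ 2 * s →
      Module.finrank K ↥(⨆ i : Fin (2 * s),
          Submodule.map (LinearMap.mulLeft K (ℓ i))
            (homogeneousSubmodule (Fin (n + 1)) K 1))
        = (n + 2).choose 2) := by
  have hle : Submodule.span K (Set.range ℓ) ≤ homogeneousSubmodule (Fin (n + 1)) K 1 :=
    Submodule.span_le.mpr (Set.range_subset_iff.mpr hhom)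
  have hdim : finrank K ↥(⨆ i : Fin (2 * s),
      Submodule.map (LinearMap.mulLeft K (ℓ i)) (homogeneousSubmodule (Fin (n + 1)) K 1)) =
        (n + 2).choose 2 - (n + 2 - min (2 * s) (n + 1)).choose 2 := by
    rw [Submodule.iSup_map_mulLeft_eq_span_range_mul, finrank_mul_homogeneousSubmodule_one hle,
      hspan, Fintype.card_fin]
    congr 2
    omega
  refine ⟨hdim, fun h ↦ ?_, fun h ↦ ?_⟩
  · rw [hdim, min_eq_left h, Nat.choose_two_sub_choose_two_sub_two_mul h]
  · rw [hdim, min_eq_right h, show n + 2 - (n + 1) = 1 by omega]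
    simp

/-- For linear forms `ℓ 1, …, ℓ 2s` in `K[x_0,…,x_n]` whose linear span has
dimension `min (2s) (n+1)` (the generic situation), the subspace `Σ ℓ_i · R_1` of `R_2` has
dimension `C(n+2,2) − C(n+2−min(2s,n+1),2)`; in particular it equals `s(2n+1) − 2s(s−1)` if
`2s ≤ n+1` and `C(n+2,2)` if `2s ≥ n+1`. -/
theorem stmt0 (K : Type*) [Field K] [IsAlgClosed K] [CharZero K]
    (n s : ℕ) (hn : 1 ≤ n) (hs : 1 ≤ s)
    (ℓ : Fin (2 * s) → MvPolynomial (Fin (n + 1)) K)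
    (hhom : ∀ i, (ℓ i).IsHomogeneous 1)
    (hspan : Module.finrank K ↥(Submodule.span K (Set.range ℓ)) = min (2 * s) (n + 1)) :
    Module.finrank K ↥(⨆ i : Fin (2 * s),
        Submodule.map (LinearMap.mulLeft K (ℓ i))
          (homogeneousSubmodule (Fin (n + 1)) K 1))
      = (n + 2).choose 2 - (n + 2 - min (2 * s) (n + 1)).choose 2 ∧
    (2 * s ≤ n + 1 →
      Module.finrank K ↥(⨆ i : Fin (2 * s),
          Submodule.map (LinearMap.mulLeft K (ℓ i))
            (homogeneousSubmodule (Fin (n + 1)) K 1))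
        = s * (2 * n + 1) - 2 * s * (s - 1)) ∧
    (n + 1 ≤ 2 * s →
      Module.finrank K ↥(⨆ i : Fin (2 * s),
          Submodule.map (LinearMap.mulLeft K (ℓ i))
            (homogeneousSubmodule (Fin (n + 1)) K 1))
        = (n + 2).choose 2) :=
  stmt0_general K n s ℓ hhom hspan
end

section
/- Let K be an algebraically closed field of characteristic zero, n ≥ 1, d ≥ 1, and let ℓ_1, …, ℓ_d be nonzero linear forms in K[x_0,…,x_n]. Then the subspace Σ_{j=1}^d π_j(ℓ)·R_1 of the space R_d of degree-d forms has dimension at most dn + 1, where π_j(ℓ) = ∏_{m≠j} ℓ_m. -/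
/-!
Each `ℓ_j` is a nonzero vector of `R_1`, so `R_1 = K ℓ_j + W_j` with `dim W_j = n`. Since
`π_j(ℓ) ℓ_j = ∏ ℓ` does not depend on `j`, every `π_j(ℓ) R_1` lies in `K ∏ ℓ + π_j(ℓ) W_j`, and
the sum of these spaces has dimension at most `1 + d n`.
-/

open MvPolynomial Module

namespace Submodule

variable {K M N : Type*} [Field K] [AddCommGroup M] [Module K M] [AddCommGroup N] [Module K N]

theorem exists_le_span_singleton_sup_of_mem {V : Submodule K M} [FiniteDimensional K V]
    {v : M} (hv : v ∈ V) (hv0 : v ≠ 0) :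
    ∃ W : Submodule K M, FiniteDimensional K W ∧ finrank K W + 1 = finrank K V ∧
      V ≤ K ∙ v ⊔ W := by
  obtain ⟨q, hq⟩ := (K ∙ (⟨v, hv⟩ : V)).exists_isCompl
  refine ⟨q.map V.subtype, inferInstance, ?_, fun x hx => ?_⟩
  · rw [← finrank_add_eq_of_isCompl hq, finrank_span_singleton (by simpa using hv0),
      finrank_map_subtype_eq, add_comm]
  · have hx' : (⟨x, hx⟩ : V) ∈ (K ∙ (⟨v, hv⟩ : V)) ⊔ q := hq.sup_eq_top ▸ mem_top
    simpa [map_sup, map_span] using mem_map_of_mem (f := V.subtype) hx'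

theorem finrank_iSup_le_sum {ι : Type*} [Fintype ι] (p : ι → Submodule K M)
    [∀ i, FiniteDimensional K (p i)] : finrank K ↥(⨆ i, p i) ≤ ∑ i, finrank K (p i) := by
  classical
  rw [← Finset.sup_univ_eq_iSup]
  induction (Finset.univ : Finset ι) using Finset.induction_on with
  | empty => simp
  | insert i s hi ih =>
    rw [Finset.sup_insert, Finset.sum_insert hi]
    exact (finrank_add_le_finrank_add_finrank _ _).trans (Nat.add_le_add_left ih _)

theorem finrank_iSup_map_le_of_apply_eq {ι : Type*} [Fintype ι] (V : Submodule K M)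
    [FiniteDimensional K V] {n : ℕ} (hV : finrank K V ≤ n + 1) (f : ι → M →ₗ[K] N) (v : ι → M)
    (hvV : ∀ i, v i ∈ V) (hv0 : ∀ i, v i ≠ 0) (w : N) (hw : ∀ i, f i (v i) = w) :
    finrank K ↥(⨆ i, V.map (f i)) ≤ Fintype.card ι * n + 1 := by
  choose W hWfin hWrank hVW using fun i => exists_le_span_singleton_sup_of_mem (hvV i) (hv0 i)
  have hle : ⨆ i, V.map (f i) ≤ K ∙ w ⊔ ⨆ i, (W i).map (f i) := iSup_le fun i =>
    calc V.map (f i) ≤ (K ∙ v i ⊔ W i).map (f i) := map_mono (hVW i)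
      _ = K ∙ w ⊔ (W i).map (f i) := by rw [map_sup, map_span, Set.image_singleton, hw]
      _ ≤ K ∙ w ⊔ ⨆ i, (W i).map (f i) := sup_le_sup_left (le_iSup (fun i => (W i).map (f i)) i) _
  calc finrank K ↥(⨆ i, V.map (f i))
      ≤ finrank K ↥(K ∙ w) + finrank K ↥(⨆ i, (W i).map (f i)) :=
        (finrank_mono hle).trans (finrank_add_le_finrank_add_finrank _ _)
    _ ≤ 1 + ∑ i, finrank K ↥((W i).map (f i)) :=
        Nat.add_le_add ((finrank_span_le_card {w}).trans (by simp)) (finrank_iSup_le_sum _)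
    _ ≤ 1 + ∑ _i : ι, n := by
        gcongr with i
        have := hWrank i
        exact (finrank_map_le _ _).trans (by omega)
    _ = Fintype.card ι * n + 1 := by simp [add_comm]

end Submodule

instance MvPolynomial.finite_homogeneousSubmodule (σ R : Type*) [Finite σ] [CommSemiring R]
    (n : ℕ) : Module.Finite R (homogeneousSubmodule σ R n) :=
  Module.Finite.iff_fg.mpr (homogeneousSubmodule_fg (σ := σ) (R := R) n)

theorem MvPolynomial.finrank_homogeneousSubmodule_one_le (σ K : Type*) [Fintype σ] [Field K] :
    finrank K (homogeneousSubmodule σ K 1) ≤ Fintype.card σ := by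
  rw [homogeneousSubmodule_one_eq_span_X]
  exact finrank_range_le_card _

theorem stmt2_general (K : Type*) [Field K]
    (n d : ℕ)
    (ℓ : Fin d → MvPolynomial (Fin (n + 1)) K)
    (hhom : ∀ j, (ℓ j).IsHomogeneous 1) (hne : ∀ j, ℓ j ≠ 0) :
    Module.finrank K ↥(⨆ j : Fin d,
        Submodule.map (LinearMap.mulLeft K (∏ m ∈ Finset.univ.erase j, ℓ m))
          (homogeneousSubmodule (Fin (n + 1)) K 1))
      ≤ d * n + 1 := by
  have hV := finrank_homogeneousSubmodule_one_le (Fin (n + 1)) K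
  rw [Fintype.card_fin] at hV
  simpa using Submodule.finrank_iSup_map_le_of_apply_eq _ hV
    (fun j => LinearMap.mulLeft K (∏ m ∈ Finset.univ.erase j, ℓ m)) ℓ hhom hne (∏ m, ℓ m)
    fun j => Finset.prod_erase_mul _ _ (Finset.mem_univ j)

/-- For nonzero linear forms `ℓ_1,…,ℓ_d` in `K[x_0,…,x_n]`, the subspace
`Σ_{j=1}^d π_j(ℓ)·R_1` of `R_d` has dimension at most `dn + 1`, where
`π_j(ℓ) = ∏_{m≠j} ℓ_m`. -/
theorem stmt2 (K : Type*) [Field K] [IsAlgClosed K] [CharZero K]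
    (n d : ℕ) (hn : 1 ≤ n) (hd : 1 ≤ d)
    (ℓ : Fin d → MvPolynomial (Fin (n + 1)) K)
    (hhom : ∀ j, (ℓ j).IsHomogeneous 1) (hne : ∀ j, ℓ j ≠ 0) :
    Module.finrank K ↥(⨆ j : Fin d,
        Submodule.map (LinearMap.mulLeft K (∏ m ∈ Finset.univ.erase j, ℓ m))
          (homogeneousSubmodule (Fin (n + 1)) K 1))
      ≤ d * n + 1 :=
  stmt2_general K n d ℓ hhom hne
end

section
/- Let K be an algebraically closed field of characteristic zero, n ≥ 1, d ≥ 2, s ≥ 1, and for each i ∈ {1,…,s} let f_i = (ℓ_{i,1},…,ℓ_{i,d}) be a d-tuple of nonzero linear forms in K[x_0,…,x_n] whose entries are pairwise non-proportional. If dim_K Σ_{i=1}^s Σ_{j=1}^d π_j(f_i)·R_1 = s(dn+1), then the sd degree-(d−1) forms π_j(f_i), for 1 ≤ i ≤ s and 1 ≤ j ≤ d, are linearly independent over K (so Σ_{i=1}^s Σ_{j=1}^d K·π_j(f_i) has dimension sd). -/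
/-!
Let `Φ` send a tuple `(g_{i,j})` of linear forms to `Σ π_j(f_i) g_{i,j}`, so that the
hypothesis is `dim (range Φ) = s(dn+1)`. The relations
`Σ_j c_{i,j} π_j(f_i) f_{i,j} = (Σ_j c_{i,j}) ∏_j f_{i,j}` exhibit an `s(d-1)`-dimensional
subspace of `ker Φ`, and rank–nullity says `ker Φ` is no larger. A relation
`Σ c_{i,j} π_j(f_i) = 0` gives, for every linear form `v`, the element `(c_{i,j} v)` of `ker Φ`;
so every `c_{i,j} v` is a multiple of `f_{i,j}`, which forces `c_{i,j} = 0` once `n ≥ 1`.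
-/

open MvPolynomial Module Submodule LinearMap

theorem LinearMap.range_sum_comp_proj {R N ι : Type*} [Semiring R] [AddCommMonoid N]
    [Module R N] [Fintype ι] {M : ι → Type*} [∀ i, AddCommMonoid (M i)]
    [∀ i, Module R (M i)] (φ : ∀ i, M i →ₗ[R] N) :
    range (∑ i, (φ i).comp (proj i)) = ⨆ i, range (φ i) := by
  classical
  refine le_antisymm ?_ (iSup_le fun i => ?_)
  · rintro _ ⟨x, rfl⟩
    rw [sum_apply]
    exact Submodule.sum_mem _ fun i _ => mem_iSup_of_mem i ⟨x i, rfl⟩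
  · rintro _ ⟨y, rfl⟩
    refine ⟨Pi.single i y, ?_⟩
    simp [sum_apply, apply_single]

theorem MvPolynomial.finrank_homogeneousSubmodule_one (σ K : Type*) [Fintype σ] [Field K] :
    finrank K (homogeneousSubmodule σ K 1) = Fintype.card σ := by
  rw [homogeneousSubmodule_one_eq_span_X, finrank_span_eq_card (linearIndependent_X σ K)]

section ProdErase

variable {K A ι κ : Type*} [Field K] [CommRing A] [Algebra K A] {V : Submodule K A}

/-- The paper's `π_j(f_i)`. -/
def prodErase [Fintype κ] [DecidableEq κ] (f : ι → κ → A) (p : ι × κ) : A :=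
  ∏ m ∈ Finset.univ.erase p.2, f p.1 m

theorem prodErase_mul_self [Fintype κ] [DecidableEq κ] (f : ι → κ → A) (p : ι × κ) :
    prodErase f p * f p.1 p.2 = ∏ m, f p.1 m :=
  Finset.prod_erase_mul _ _ (Finset.mem_univ _)

variable (V) in
def mulProdErase [Fintype ι] [Fintype κ] [DecidableEq κ] (f : ι → κ → A) :
    (ι × κ → V) →ₗ[K] A :=
  ∑ p, ((mulLeft K (prodErase f p)).comp V.subtype).comp (proj p)

theorem mulProdErase_apply [Fintype ι] [Fintype κ] [DecidableEq κ] (f : ι → κ → A)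
    (g : ι × κ → V) :
    mulProdErase V f g = ∑ p, prodErase f p * g p := by
  simp [mulProdErase]

theorem range_mulProdErase [Fintype ι] [Fintype κ] [DecidableEq κ] (f : ι → κ → A) :
    range (mulProdErase V f) = ⨆ i, ⨆ j, map (mulLeft K (prodErase f (i, j))) V := by
  simp_rw [mulProdErase, range_sum_comp_proj, range_comp, range_subtype, iSup_prod]

variable (K ι κ) in
def rowSum [Fintype κ] : (ι × κ → K) →ₗ[K] (ι → K) :=
  pi fun i => ∑ j, proj (i, j)

theorem rowSum_apply [Fintype κ] (c : ι × κ → K) (i : ι) :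
    rowSum K ι κ c i = ∑ j, c (i, j) := by
  simp [rowSum]

theorem rowSum_surjective [Fintype κ] [Nonempty κ] : Function.Surjective (rowSum K ι κ) := by
  classical
  let j₀ : κ := Classical.arbitrary κ
  intro v
  refine ⟨fun p => if p.2 = j₀ then v p.1 else 0, funext fun i => ?_⟩
  simp [rowSum_apply]

theorem finrank_ker_rowSum_add [Fintype ι] [Fintype κ] [Nonempty κ] :
    finrank K (ker (rowSum K ι κ)) + Fintype.card ι = Fintype.card ι * Fintype.card κ := by
  have := (rowSum K ι κ).finrank_range_add_finrank_ker
  rw [range_eq_top.mpr rowSum_surjective, finrank_top] at this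
  simp only [finrank_fintype_fun_eq_card, Fintype.card_prod] at this
  omega

variable (V) in
def smulTuple (f : ι → κ → V) : (ι × κ → K) →ₗ[K] (ι × κ → V) :=
  pi fun p => (toSpanSingleton K V (f p.1 p.2)).comp (proj p)

theorem smulTuple_apply (f : ι → κ → V) (c : ι × κ → K) (p : ι × κ) :
    smulTuple V f c p = c p • f p.1 p.2 := by
  simp [smulTuple]

theorem smulTuple_injective {f : ι → κ → V} (hf : ∀ i j, f i j ≠ 0) :
    Function.Injective (smulTuple V f) := by
  rw [← ker_eq_bot, ker_eq_bot']
  intro c hc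
  funext p
  have : c p • f p.1 p.2 = 0 := by rw [← smulTuple_apply, hc, Pi.zero_apply]
  exact (smul_eq_zero.mp this).resolve_right (hf p.1 p.2)

theorem map_smulTuple_ker_rowSum_le [Fintype ι] [Fintype κ] [DecidableEq κ]
    (f : ι → κ → V) :
    (ker (rowSum K ι κ)).map (smulTuple V f) ≤ ker (mulProdErase V fun i j => (f i j : A)) := by
  rintro _ ⟨c, hc, rfl⟩
  rw [mem_ker, mulProdErase_apply, Fintype.sum_prod_type]
  refine Finset.sum_eq_zero fun i _ => ?_
  have hci : ∑ j, c (i, j) = 0 := by rw [← rowSum_apply, mem_ker.mp hc, Pi.zero_apply]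
  calc ∑ j, prodErase (fun i j => (f i j : A)) (i, j) * (smulTuple V f c (i, j) : A)
      = ∑ j, c (i, j) • ∏ m, (f i m : A) := by
        refine Finset.sum_congr rfl fun j _ => ?_
        rw [smulTuple_apply, Submodule.coe_smul, mul_smul_comm, prodErase_mul_self]
    _ = 0 := by rw [← Finset.sum_smul, hci, zero_smul]

theorem ker_mulProdErase_eq [Fintype ι] [Fintype κ] [DecidableEq κ] [Nonempty κ]
    [FiniteDimensional K V] {N : ℕ}
    (hV : finrank K V = N + 1) {f : ι → κ → V} (hf : ∀ i j, f i j ≠ 0)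
    (hdim : finrank K (range (mulProdErase V fun i j => (f i j : A)))
      = Fintype.card ι * (Fintype.card κ * N + 1)) :
    ker (mulProdErase V fun i j => (f i j : A)) = (ker (rowSum K ι κ)).map (smulTuple V f) := by
  refine (eq_of_le_of_finrank_eq (map_smulTuple_ker_rowSum_le f) ?_).symm
  have hΦ := (mulProdErase V fun i j => (f i j : A)).finrank_range_add_finrank_ker
  have hrow := finrank_ker_rowSum_add (K := K) (ι := ι) (κ := κ)
  rw [hdim, finrank_pi_fintype, hV] at hΦ
  simp only [Finset.sum_const, Finset.card_univ, Fintype.card_prod, smul_eq_mul] at hΦ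
  rw [(equivMapOfInjective _ (smulTuple_injective hf) _).finrank_eq.symm]
  linarith

theorem linearIndependent_prodErase [Fintype ι] [Fintype κ] [DecidableEq κ] [Nonempty κ]
    [FiniteDimensional K V] {N : ℕ} (hV : finrank K V = N + 1) (hN : 1 ≤ N)
    {f : ι → κ → V} (hf : ∀ i j, f i j ≠ 0)
    (hdim : finrank K
        ↥(⨆ i, ⨆ j, map (mulLeft K (prodErase (fun i j => (f i j : A)) (i, j))) V)
      = Fintype.card ι * (Fintype.card κ * N + 1)) :
    LinearIndependent K (prodErase fun i j => (f i j : A)) := by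
  rw [← range_mulProdErase] at hdim
  have hker := ker_mulProdErase_eq hV hf hdim
  rw [Fintype.linearIndependent_iff]
  intro c hc p
  by_contra hcp
  suffices ⊤ ≤ K ∙ f p.1 p.2 by
    have := (finrank_mono this).trans (finrank_span_le_card ({f p.1 p.2} : Set V))
    simp only [finrank_top, hV, Set.toFinset_singleton, Finset.card_singleton] at this
    omega
  intro v _
  have hv : (fun q => c q • v) ∈ ker (mulProdErase V fun i j => (f i j : A)) := by
    rw [mem_ker, mulProdErase_apply]
    simp only [Submodule.coe_smul, mul_smul_comm, ← smul_mul_assoc, ← Finset.sum_mul, hc,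
      zero_mul]
  rw [hker] at hv
  obtain ⟨c', -, hc'⟩ := hv
  have hp : c' p • f p.1 p.2 = c p • v := by rw [← smulTuple_apply, hc']
  rw [← inv_smul_smul₀ hcp v, ← hp, smul_smul]
  exact smul_mem _ _ (mem_span_singleton_self _)

end ProdErase

theorem stmt4_general (K : Type*) [Field K]
    (n d s : ℕ) (hn : 1 ≤ n) (hd : 2 ≤ d)
    (f : Fin s → Fin d → MvPolynomial (Fin (n + 1)) K)
    (hhom : ∀ i j, (f i j).IsHomogeneous 1) (hne : ∀ i j, f i j ≠ 0)
    (hdim : Module.finrank K ↥(⨆ i : Fin s, ⨆ j : Fin d,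
        Submodule.map (LinearMap.mulLeft K (∏ m ∈ Finset.univ.erase j, f i m))
          (homogeneousSubmodule (Fin (n + 1)) K 1))
      = s * (d * n + 1)) :
    LinearIndependent K
      (fun p : Fin s × Fin d => ∏ m ∈ Finset.univ.erase p.2, f p.1 m) := by
  have : Nonempty (Fin d) := ⟨⟨0, by omega⟩⟩
  have hV : finrank K (homogeneousSubmodule (Fin (n + 1)) K 1) = n + 1 := by
    rw [finrank_homogeneousSubmodule_one, Fintype.card_fin]
  have : FiniteDimensional K (homogeneousSubmodule (Fin (n + 1)) K 1) :=
    Module.finite_of_finrank_pos (by omega)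
  refine linearIndependent_prodErase (f := fun i j => ⟨f i j, hhom i j⟩) hV hn
    (fun i j h => hne i j (congrArg Subtype.val h)) ?_
  rw [Fintype.card_fin, Fintype.card_fin]
  exact hdim

/-- Lemma 4.1 of the paper: If `f_1,…,f_s` are `d`-tuples of nonzero, pairwise
non-proportional linear forms in `K[x_0,…,x_n]` and
`dim Σ_{i=1}^s Σ_{j=1}^d π_j(f_i)·R_1 = s(dn+1)`, then the `sd` forms `π_j(f_i)` are linearly
independent over `K`. -/
theorem stmt4 (K : Type*) [Field K] [IsAlgClosed K] [CharZero K]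
    (n d s : ℕ) (hn : 1 ≤ n) (hd : 2 ≤ d) (hs : 1 ≤ s)
    (f : Fin s → Fin d → MvPolynomial (Fin (n + 1)) K)
    (hhom : ∀ i j, (f i j).IsHomogeneous 1) (hne : ∀ i j, f i j ≠ 0)
    (hprop : ∀ i, ∀ j j' : Fin d, j ≠ j' → ∀ c : K, f i j ≠ c • f i j')
    (hdim : Module.finrank K ↥(⨆ i : Fin s, ⨆ j : Fin d,
        Submodule.map (LinearMap.mulLeft K (∏ m ∈ Finset.univ.erase j, f i m))
          (homogeneousSubmodule (Fin (n + 1)) K 1))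
      = s * (d * n + 1)) :
    LinearIndependent K
      (fun p : Fin s × Fin d => ∏ m ∈ Finset.univ.erase p.2, f p.1 m) :=
  stmt4_general K n d s hn hd f hhom hne hdim
end

section
/- Let K be an algebraically closed field of characteristic zero, n ≥ 1, d ≥ 3, and let f = (ℓ_1,…,ℓ_d) be a d-tuple of linear forms in K[x_0,…,x_n] with ℓ_1 = x_0 and ℓ_2,…,ℓ_d ∈ U = span{x_1,…,x_n}. Then the subspace Σ_{j=1}^d π_j(f)·R_1 of R_d decomposes as the direct sum π_1(f)·U ⊕ x_0·(Σ_{j=2}^d π_{{1,j}}(f)·U) ⊕ x_0^2·(Σ_{j=2}^d K·π_{{1,j}}(f)), where π_{{1,j}}(f) = ∏_{m∉{1,j}} ℓ_m, the directness of the sum being given by the grading by degree in x_0. -/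
/-!
Write `q_j = π_{{1,j}}(f)`, so that `π_j(f) = x_0 q_j` for `j ≥ 2`, and split
`R_1 = K x_0 + U`. Then `π_j · R_1 = x_0² K q_j + x_0 q_j U` for `j ≥ 2`, while
`π_1 · R_1 = π_1 U + K x_0 π_1`, and `x_0 π_1 = x_0 q_2 ℓ_2` already lies in `x_0 q_2 U`;
summing gives the equality. Since `π_1`, the `q_j` and `U` lie in `S = K[x_1,…,x_n]`, the three
summands lie in `x_0^i S` for `i = 0, 1, 2`, and these are independent: viewing a polynomial as
one in `x_0` over `S`, the projection to `x_0^i S` is its `i`-th coefficient.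
-/

open MvPolynomial

theorem Submodule.map_mulLeft_span_singleton {K A : Type*} [CommSemiring K] [Semiring A]
    [Algebra K A] (a b : A) : (K ∙ b).map (LinearMap.mulLeft K a) = K ∙ (a * b) := by
  rw [Submodule.map_span, Set.image_singleton, LinearMap.mulLeft_apply]

theorem Finset.prod_erase_eq_mul_prod_sdiff_pair {α β : Type*} [CommMonoid β] [DecidableEq α]
    {s : Finset α} (f : α → β) {z j : α} (hz : z ∈ s) (hj : j ≠ z) :
    ∏ m ∈ s.erase j, f m = f z * ∏ m ∈ s \ {z, j}, f m := by
  rw [Finset.sdiff_insert, Finset.sdiff_singleton_eq_erase,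
    Finset.mul_prod_erase _ f (Finset.mem_erase.mpr ⟨hj.symm, hz⟩)]

theorem iSup_map_mulLeft_prod_univ_erase {K A ι : Type*} [CommSemiring K] [CommSemiring A]
    [Algebra K A] [Fintype ι] [DecidableEq ι] (f : ι → A) {z j₁ : ι} (hj₁ : j₁ ≠ z)
    (U : Submodule K A) (hU : f j₁ ∈ U) :
    ⨆ j, (K ∙ f z ⊔ U).map (LinearMap.mulLeft K (∏ m ∈ Finset.univ.erase j, f m)) =
      U.map (LinearMap.mulLeft K (∏ m ∈ Finset.univ.erase z, f m)) ⊔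
      (⨆ (j) (_ : j ≠ z),
        U.map (LinearMap.mulLeft K (∏ m ∈ Finset.univ \ {z, j}, f m))).map
          (LinearMap.mulLeft K (f z)) ⊔
      (⨆ (j) (_ : j ≠ z), K ∙ ∏ m ∈ Finset.univ \ {z, j}, f m).map
        (LinearMap.mulLeft K (f z ^ 2)) := by
  set q : ι → A := fun j => ∏ m ∈ Finset.univ \ {z, j}, f m
  have hterm : ∀ j ≠ z,
      (K ∙ f z ⊔ U).map (LinearMap.mulLeft K (∏ m ∈ Finset.univ.erase j, f m)) =
        (K ∙ q j).map (LinearMap.mulLeft K (f z ^ 2)) ⊔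
        (U.map (LinearMap.mulLeft K (q j))).map (LinearMap.mulLeft K (f z)) := by
    intro j hj
    rw [Submodule.map_sup, Submodule.map_mulLeft_span_singleton,
      Submodule.map_mulLeft_span_singleton,
      Finset.prod_erase_eq_mul_prod_sdiff_pair f (Finset.mem_univ z) hj, ← Submodule.map_comp,
      ← LinearMap.mulLeft_mul, mul_right_comm, ← sq]
  have hcorner : K ∙ ((∏ m ∈ Finset.univ.erase z, f m) * f z) ≤
      (⨆ (j) (_ : j ≠ z), U.map (LinearMap.mulLeft K (q j))).map
        (LinearMap.mulLeft K (f z)) := by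
    rw [Submodule.span_singleton_le_iff_mem, mul_comm,
      Finset.prod_erase_eq_mul_prod_sdiff_pair f (Finset.mem_univ j₁) hj₁.symm,
      Finset.pair_comm, mul_comm (f j₁)]
    exact Submodule.mem_map_of_mem <| Submodule.mem_iSup_of_mem j₁ <|
      Submodule.mem_iSup_of_mem hj₁ (Submodule.mem_map_of_mem hU)
  rw [iSup_split_single _ z, iSup_congr fun j => iSup_congr fun hj => hterm j hj]
  simp only [iSup_sup_eq, Submodule.map_iSup, Submodule.map_sup,
    Submodule.map_mulLeft_span_singleton] at hcorner ⊢
  rw [sup_comm (K ∙ _), sup_assoc, sup_comm (⨆ j, ⨆ (_ : j ≠ z), K ∙ _),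
    ← sup_assoc (K ∙ _), sup_eq_right.mpr hcorner, sup_assoc]

theorem Subalgebra.map_mulLeft_le_toSubmodule {K A : Type*} [CommSemiring K] [Semiring A]
    [Algebra K A] {S : Subalgebra K A} {a : A} (ha : a ∈ S) {M : Submodule K A}
    (hM : M ≤ Subalgebra.toSubmodule S) :
    M.map (LinearMap.mulLeft K a) ≤ Subalgebra.toSubmodule S := by
  rintro _ ⟨m, hm, rfl⟩
  exact S.mul_mem ha (hM hm)

theorem iSupIndep.disjoint_sup_of_le {ι α : Type*} [CompleteLattice α] {t : ι → α}
    (ht : iSupIndep t) {i j k : ι} (hj : j ≠ i) (hk : k ≠ i) {a b c : α} (ha : a ≤ t i)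
    (hb : b ≤ t j) (hc : c ≤ t k) : Disjoint a (b ⊔ c) :=
  (ht i).mono ha (sup_le (hb.trans (le_iSup₂ (f := fun l (_ : l ≠ i) => t l) j hj))
    (hc.trans (le_iSup₂ (f := fun l (_ : l ≠ i) => t l) k hk)))

namespace MvPolynomial

variable (K : Type*) [CommSemiring K] (n : ℕ)

theorem homogeneousSubmodule_one_eq_span_X_zero_sup :
    homogeneousSubmodule (Fin (n + 1)) K 1 =
      K ∙ X 0 ⊔
        Submodule.span K (Set.range fun i : Fin n => (X i.succ : MvPolynomial _ K)) := by
  rw [homogeneousSubmodule_one_eq_span_X, Fin.range_fin_succ, Submodule.span_insert]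
  rfl

theorem finSuccEquiv_rename_succ (g : MvPolynomial (Fin n) K) :
    finSuccEquiv K n (rename Fin.succ g) = Polynomial.C g := by
  have h : (finSuccEquiv K n).toAlgHom.comp (rename Fin.succ) =
      IsScalarTower.toAlgHom K (MvPolynomial (Fin n) K) (Polynomial (MvPolynomial (Fin n) K)) := by
    apply algHom_ext
    intro i
    simp [finSuccEquiv_X_succ, Polynomial.algebraMap_eq]
  simpa [Polynomial.algebraMap_eq] using DFunLike.congr_fun h g

theorem span_X_succ_le_range_rename_succ :
    Submodule.span K (Set.range fun i : Fin n => (X i.succ : MvPolynomial (Fin (n + 1)) K)) ≤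
      Subalgebra.toSubmodule (rename Fin.succ : MvPolynomial (Fin n) K →ₐ[K] _).range :=
  Submodule.span_le.mpr <| Set.range_subset_iff.mpr fun i => ⟨X i, rename_X _ _⟩

noncomputable def finSuccCoeff (i : ℕ) :
    MvPolynomial (Fin (n + 1)) K →ₗ[K] MvPolynomial (Fin n) K :=
  ((Polynomial.lcoeff _ i).restrictScalars K).comp (finSuccEquiv K n).toLinearMap

theorem finSuccCoeff_X_zero_pow_mul_rename_succ (i j : ℕ) (g : MvPolynomial (Fin n) K) :
    finSuccCoeff K n i (X 0 ^ j * rename Fin.succ g) = if i = j then g else 0 := by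
  rw [finSuccCoeff, LinearMap.comp_apply, AlgEquiv.toLinearMap_apply, map_mul, map_pow,
    finSuccEquiv_X_zero, finSuccEquiv_rename_succ, mul_comm, LinearMap.restrictScalars_apply,
    Polynomial.lcoeff_apply, Polynomial.coeff_C_mul_X_pow]

theorem iSupIndep_map_mulLeft_X_zero_pow_range_rename_succ :
    iSupIndep fun i : ℕ => (Subalgebra.toSubmodule
      (rename Fin.succ : MvPolynomial (Fin n) K →ₐ[K] MvPolynomial (Fin (n + 1)) K).range).map
        (LinearMap.mulLeft K (X 0 ^ i)) := by
  intro i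
  have hker : ⨆ (j) (_ : j ≠ i), (Subalgebra.toSubmodule
      (rename Fin.succ : MvPolynomial (Fin n) K →ₐ[K] MvPolynomial (Fin (n + 1)) K).range).map
        (LinearMap.mulLeft K (X 0 ^ j)) ≤ LinearMap.ker (finSuccCoeff K n i) := by
    refine iSup₂_le fun j hj => ?_
    rintro _ ⟨_, ⟨g, rfl⟩, rfl⟩
    simp only [LinearMap.mem_ker, LinearMap.mulLeft_apply, AlgHom.toRingHom_eq_coe,
      RingHom.coe_coe, finSuccCoeff_X_zero_pow_mul_rename_succ, if_neg hj.symm]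
  refine Submodule.disjoint_def.mpr fun p hp hp' => ?_
  obtain ⟨_, ⟨g, rfl⟩, rfl⟩ := hp
  have hg : g = 0 := by
    simpa only [LinearMap.mem_ker, LinearMap.mulLeft_apply, AlgHom.toRingHom_eq_coe,
      RingHom.coe_coe, finSuccCoeff_X_zero_pow_mul_rename_succ, if_true] using hker hp'
  simp [hg]

end MvPolynomial

/-- For a `d`-tuple `f = (ℓ_1,…,ℓ_d)` of linear forms with `ℓ_1 = x_0` and
`ℓ_2,…,ℓ_d ∈ U = span{x_1,…,x_n}`, the subspace `Σ_{j=1}^d π_j(f)·R_1` of `R_d` decomposes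
as the direct sum
`π_1(f)·U ⊕ x_0·(Σ_{j=2}^d π_{{1,j}}(f)·U) ⊕ x_0²·(Σ_{j=2}^d K·π_{{1,j}}(f))`,
the directness being given by the grading by degree in `x_0`. -/
theorem stmt7 (K : Type*) [Field K]
    (n d : ℕ) (hd : 3 ≤ d)
    (f : Fin d → MvPolynomial (Fin (n + 1)) K)
    (hf0 : f ⟨0, by omega⟩ = X 0)
    (hfU : ∀ j : Fin d, j ≠ ⟨0, by omega⟩ →
      f j ∈ Submodule.span K
        (Set.range fun i : Fin n => (X i.succ : MvPolynomial (Fin (n + 1)) K))) :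
    (⨆ j : Fin d,
        Submodule.map (LinearMap.mulLeft K (∏ m ∈ Finset.univ.erase j, f m))
          (homogeneousSubmodule (Fin (n + 1)) K 1))
      = (Submodule.map
            (LinearMap.mulLeft K (∏ m ∈ Finset.univ.erase (⟨0, by omega⟩ : Fin d), f m))
            (Submodule.span K
              (Set.range fun i : Fin n => (X i.succ : MvPolynomial (Fin (n + 1)) K)))) ⊔
        (Submodule.map (LinearMap.mulLeft K (X 0))
          (⨆ (j : Fin d) (_ : j ≠ ⟨0, by omega⟩),
            Submodule.map
              (LinearMap.mulLeft K (∏ m ∈ Finset.univ \ {⟨0, by omega⟩, j}, f m))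
              (Submodule.span K
                (Set.range fun i : Fin n => (X i.succ : MvPolynomial (Fin (n + 1)) K))))) ⊔
        (Submodule.map (LinearMap.mulLeft K ((X 0) ^ 2))
          (⨆ (j : Fin d) (_ : j ≠ ⟨0, by omega⟩),
            Submodule.span K {∏ m ∈ Finset.univ \ {⟨0, by omega⟩, j}, f m})) ∧
    Disjoint
      (Submodule.map
          (LinearMap.mulLeft K (∏ m ∈ Finset.univ.erase (⟨0, by omega⟩ : Fin d), f m))
          (Submodule.span K
            (Set.range fun i : Fin n => (X i.succ : MvPolynomial (Fin (n + 1)) K))))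
      ((Submodule.map (LinearMap.mulLeft K (X 0))
          (⨆ (j : Fin d) (_ : j ≠ ⟨0, by omega⟩),
            Submodule.map
              (LinearMap.mulLeft K (∏ m ∈ Finset.univ \ {⟨0, by omega⟩, j}, f m))
              (Submodule.span K
                (Set.range fun i : Fin n => (X i.succ : MvPolynomial (Fin (n + 1)) K))))) ⊔
        (Submodule.map (LinearMap.mulLeft K ((X 0) ^ 2))
          (⨆ (j : Fin d) (_ : j ≠ ⟨0, by omega⟩),
            Submodule.span K {∏ m ∈ Finset.univ \ {⟨0, by omega⟩, j}, f m}))) ∧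
    Disjoint
      (Submodule.map (LinearMap.mulLeft K (X 0))
        (⨆ (j : Fin d) (_ : j ≠ ⟨0, by omega⟩),
          Submodule.map
            (LinearMap.mulLeft K (∏ m ∈ Finset.univ \ {⟨0, by omega⟩, j}, f m))
            (Submodule.span K
              (Set.range fun i : Fin n => (X i.succ : MvPolynomial (Fin (n + 1)) K)))))
      ((Submodule.map
          (LinearMap.mulLeft K (∏ m ∈ Finset.univ.erase (⟨0, by omega⟩ : Fin d), f m))
          (Submodule.span K
            (Set.range fun i : Fin n => (X i.succ : MvPolynomial (Fin (n + 1)) K)))) ⊔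
        (Submodule.map (LinearMap.mulLeft K ((X 0) ^ 2))
          (⨆ (j : Fin d) (_ : j ≠ ⟨0, by omega⟩),
            Submodule.span K {∏ m ∈ Finset.univ \ {⟨0, by omega⟩, j}, f m}))) ∧
    Disjoint
      (Submodule.map (LinearMap.mulLeft K ((X 0) ^ 2))
        (⨆ (j : Fin d) (_ : j ≠ ⟨0, by omega⟩),
          Submodule.span K {∏ m ∈ Finset.univ \ {⟨0, by omega⟩, j}, f m}))
      ((Submodule.map
          (LinearMap.mulLeft K (∏ m ∈ Finset.univ.erase (⟨0, by omega⟩ : Fin d), f m))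
          (Submodule.span K
            (Set.range fun i : Fin n => (X i.succ : MvPolynomial (Fin (n + 1)) K)))) ⊔
        (Submodule.map (LinearMap.mulLeft K (X 0))
          (⨆ (j : Fin d) (_ : j ≠ ⟨0, by omega⟩),
            Submodule.map
              (LinearMap.mulLeft K (∏ m ∈ Finset.univ \ {⟨0, by omega⟩, j}, f m))
              (Submodule.span K
                (Set.range fun i : Fin n => (X i.succ : MvPolynomial (Fin (n + 1)) K)))))) := by
  set z : Fin d := ⟨0, by omega⟩
  set U := Submodule.span K
    (Set.range fun i : Fin n => (X i.succ : MvPolynomial (Fin (n + 1)) K))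
  have h1 : (⟨1, by omega⟩ : Fin d) ≠ z := by simp [z, Fin.ext_iff]
  refine ⟨?_, ?_⟩
  · rw [homogeneousSubmodule_one_eq_span_X_zero_sup, ← hf0]
    exact iSup_map_mulLeft_prod_univ_erase f h1 U (hfU _ h1)
  set S := (rename Fin.succ : MvPolynomial (Fin n) K →ₐ[K] MvPolynomial (Fin (n + 1)) K).range
  have hprodS : ∀ s : Finset (Fin d), z ∉ s → ∏ m ∈ s, f m ∈ S := fun s hs =>
    prod_mem fun m hm => span_X_succ_le_range_rename_succ K n (hfU m (ne_of_mem_of_not_mem hm hs))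
  have hA : U.map (LinearMap.mulLeft K (∏ m ∈ Finset.univ.erase z, f m)) ≤
      (Subalgebra.toSubmodule S).map (LinearMap.mulLeft K (X 0 ^ 0)) := by
    simpa only [pow_zero, LinearMap.mulLeft_one, Submodule.map_id] using
      Subalgebra.map_mulLeft_le_toSubmodule (hprodS _ (Finset.notMem_erase z _))
        (span_X_succ_le_range_rename_succ K n)
  have hB : Submodule.map (LinearMap.mulLeft K (X 0))
      (⨆ (j) (_ : j ≠ z), U.map (LinearMap.mulLeft K (∏ m ∈ Finset.univ \ {z, j}, f m))) ≤
        (Subalgebra.toSubmodule S).map (LinearMap.mulLeft K (X 0 ^ 1)) := by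
    rw [pow_one]
    exact Submodule.map_mono <| iSup₂_le fun j _ => Subalgebra.map_mulLeft_le_toSubmodule
      (hprodS _ (by simp)) (span_X_succ_le_range_rename_succ K n)
  have hC := Submodule.map_mono (f := LinearMap.mulLeft K (X 0 ^ 2)) <|
    iSup₂_le fun j (_ : j ≠ z) =>
      (Submodule.span_singleton_le_iff_mem _ (Subalgebra.toSubmodule S)).mpr
        (hprodS (Finset.univ \ {z, j}) (by simp))
  have ht := iSupIndep_map_mulLeft_X_zero_pow_range_rename_succ K n
  exact ⟨ht.disjoint_sup_of_le one_ne_zero two_ne_zero hA hB hC,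
    ht.disjoint_sup_of_le zero_ne_one (by decide) hB hA hC,
    ht.disjoint_sup_of_le (by decide) (by decide) hC hA hB⟩
end
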